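/- Let D_τ^{(1)}(λ) be the matrix obtained from D_τ(λ) by replacing its 0-th column by the vector w(λ) ∈ ℂ^{ℤ/pℤ} with entries w(λ)_k = ((q^{2k}λ² + q^{−2k}λ^{−2})² − (q + q^{−1})²). If τ(1/λ) = τ(λ) for all λ ∈ ℂ∖{0}, then det D_τ^{(1)}(1/λ) = det D_τ^{(1)}(λ) for every λ ∈ ℂ∖{0}. -/

import Mathlib

/-- The `p×p` matrix `D_τ(λ)`, indexed by `ℤ/pℤ`, with entries
`(D_τ(λ))_{k,k} = τ(q^k λ)`, `(D_τ(λ))_{k,k−1} = −a(q^k λ)`,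
`(D_τ(λ))_{k,k+1} = −a(1/(q^k λ))`, all other entries zero. -/
noncomputable def Dmat (p : ℕ) (q : ℂ) (tau a : ℂ → ℂ) (lam : ℂ) :
    Matrix (ZMod p) (ZMod p) ℂ :=
  Matrix.of fun k l : ZMod p =>
    if l = k then tau (q ^ k.val * lam)
    else if l = k - 1 then -a (q ^ k.val * lam)
    else if l = k + 1 then -a ((q ^ k.val * lam)⁻¹)
    else 0

/-- The matrix `D_τ^{(1)}(λ)`: `D_τ(λ)` with its `0`-th column replaced by the vector
`w(λ)_k = ((q^{2k} λ² + q^{−2k} λ^{−2})² − (q + q⁻¹)²)`. -/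
noncomputable def Dmat1 (p : ℕ) (q : ℂ) (tau a : ℂ → ℂ) (lam : ℂ) :
    Matrix (ZMod p) (ZMod p) ℂ :=
  (Dmat p q tau a lam).updateCol 0 (fun k : ZMod p =>
    (q ^ (2 * k.val) * lam ^ 2 + (q ^ (2 * k.val) * lam ^ 2)⁻¹) ^ 2 - (q + q⁻¹) ^ 2)

/-!
Inverting `λ` is undone by the reflection `k ↦ -k` of `ℤ/pℤ`. Since `q ^ p = 1` we have
`q^{-k} λ = (q^k λ⁻¹)⁻¹`, so reflecting rows and columns of `D_τ(λ)` fixes the diagonal (by the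
symmetry of `τ`) and exchanges the two off-diagonals, giving `D_τ(λ⁻¹)`. The reflection fixes
column `0`, and `w(λ⁻¹)_k = w(λ)_{-k}` because `w` is a function of `z + z⁻¹` with
`z = q^{2k} λ²`. Conjugating by a permutation matrix does not change the determinant.
-/

open Matrix

theorem pow_val_neg {M : Type*} [DivisionMonoid M] {p : ℕ} [NeZero p] {q : M}
    (hq : q ^ p = 1) (k : ZMod p) : q ^ (-k).val = (q ^ k.val)⁻¹ := by
  refine eq_inv_of_mul_eq_one_left ?_
  obtain ⟨m, hm⟩ : p ∣ (-k).val + k.val := by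
    rw [← ZMod.natCast_eq_zero_iff]; simp
  rw [← pow_add, hm, pow_mul, hq, one_pow]

section Reflection

variable {p : ℕ} [NeZero p] [Fact (2 < p)] {q : ℂ} (hq : q ^ p = 1) {tau : ℂ → ℂ}
  (htau : ∀ lam : ℂ, lam ≠ 0 → tau lam⁻¹ = tau lam) (a : ℂ → ℂ) {lam : ℂ} (hlam : lam ≠ 0)
include hq htau hlam

theorem Dmat_inv_eq_submatrix_neg :
    Dmat p q tau a lam⁻¹ = (Dmat p q tau a lam).submatrix (Equiv.neg _) (Equiv.neg _) := by
  ext k l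
  have hq0 : q ≠ 0 := by rintro rfl; simp [NeZero.ne p] at hq
  -- for `p > 2` the sub- and superdiagonal are disjoint, so the reflection can swap them
  have hsides : l = k - 1 → ¬l = k + 1 := by
    rintro rfl h
    exact ZMod.neg_one_ne_one (by linear_combination h)
  have hsub : -l = -k - 1 ↔ l = k + 1 := by rw [neg_eq_iff_eq_neg]; ring_nf
  have hsup : -l = -k + 1 ↔ l = k - 1 := by rw [neg_eq_iff_eq_neg]; ring_nf
  have hinv : q ^ k.val * lam⁻¹ = ((q ^ k.val)⁻¹ * lam)⁻¹ := by rw [mul_inv, inv_inv]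
  simp only [Dmat, submatrix_apply, of_apply, Equiv.neg_apply, neg_inj, hsub, hsup,
    pow_val_neg hq]
  rw [hinv, htau _ (mul_ne_zero (inv_ne_zero (pow_ne_zero _ hq0)) hlam), inv_inv,
    ite_ite_comm (h := hsides)]

theorem Dmat1_inv_eq_submatrix_neg :
    Dmat1 p q tau a lam⁻¹ = (Dmat1 p q tau a lam).submatrix (Equiv.neg _) (Equiv.neg _) := by
  rw [Dmat1, Dmat1, submatrix_updateCol_equiv, ← Dmat_inv_eq_submatrix_neg hq htau a hlam]
  congr 1
  · simp
  · funext k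
    have hz : q ^ (2 * (-k).val) * lam ^ 2 = (q ^ (2 * k.val) * lam⁻¹ ^ 2)⁻¹ := by
      rw [pow_mul', pow_val_neg hq, pow_mul', mul_inv, inv_pow, inv_pow, inv_inv]
    rw [Equiv.neg_apply, hz, inv_inv, add_comm]

end Reflection

theorem stmt_5_general (p : ℕ) [NeZero p] (hp3 : 3 ≤ p)
    (q : ℂ) (hq : IsPrimitiveRoot q p)
    (tau a : ℂ → ℂ)
    (htau_inv : ∀ lam : ℂ, lam ≠ 0 → tau lam⁻¹ = tau lam) :
    ∀ lam : ℂ, lam ≠ 0 →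
      (Dmat1 p q tau a lam⁻¹).det = (Dmat1 p q tau a lam).det := by
  intro lam hlam
  have : Fact (2 < p) := ⟨hp3⟩
  rw [Dmat1_inv_eq_submatrix_neg hq.pow_eq_one htau_inv a hlam, det_submatrix_equiv_self]

/-- If `τ(1/λ) = τ(λ)` for all nonzero `λ`, then
`det D_τ^{(1)}(1/λ) = det D_τ^{(1)}(λ)` for every nonzero `λ`. -/
theorem stmt_5 (p : ℕ) [NeZero p] (hodd : Odd p) (hp3 : 3 ≤ p)
    (q : ℂ) (hq : IsPrimitiveRoot q p)
    (tau a : ℂ → ℂ)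
    (htau_inv : ∀ lam : ℂ, lam ≠ 0 → tau lam⁻¹ = tau lam) :
    ∀ lam : ℂ, lam ≠ 0 →
      (Dmat1 p q tau a lam⁻¹).det = (Dmat1 p q tau a lam).det :=
  stmt_5_general p hp3 q hq tau a htau_inv
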